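/- Let P be a nonconstant polynomial over ℂ of degree m = P.natDegree ≥ 1, and let f(z) := P.eval z. Then (1/π)·∫_ℂ (f^♯(z))² dλ(z) ≤ m, i.e. ∫_ℂ (‖deriv f z‖ / (1 + ‖f z‖²))² dλ(z) ≤ m·π. (In particular, for f_n = n·P with P of degree m having m distinct zeros in the unit disk — the example showing the order bound in the quasi-normality theorem is sharp — the spherical-area bound holds with C = m.) -/

import Mathlib

/-!
For holomorphic `f` the real Jacobian of `f` is `‖f'‖²`, so `(f^♯)² dλ` is the pullback under `f`
of the spherical density `(1 + ‖w‖²)⁻² dλ(w)`, whose total mass is `π`. Off the critical points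
`f` is locally injective, so that set splits into countably many measurable pieces on which the
change of variables formula applies; summing over the pieces bounds the integral by
`∫ N(w) (1 + ‖w‖²)⁻² dλ(w)`, where `N(w) ≤ m` counts the solutions of `P(z) = w`.
-/

open MeasureTheory

/-- The spherical derivative of `f : ℂ → ℂ`. -/
noncomputable def sphDeriv (f : ℂ → ℂ) (z : ℂ) : ℝ :=
  ‖deriv f z‖ / (1 + ‖f z‖ ^ 2)

open Set Filter Topology Function
open scoped ENNReal

theorem exists_measurable_partition_injOn {X Y : Type*} [TopologicalSpace X]
    [SecondCountableTopology X] [MeasurableSpace X] [OpensMeasurableSpace X]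
    {f : X → Y} {s : Set X} (hs : MeasurableSet s) (hloc : ∀ x ∈ s, ∃ U ∈ 𝓝[s] x, InjOn f U) :
    ∃ t : ℕ → Set X, (∀ n, MeasurableSet (t n)) ∧ Pairwise (Disjoint on t) ∧
      ⋃ n, t n = s ∧ ∀ n, InjOn f (t n) := by
  rcases s.eq_empty_or_nonempty with rfl | ⟨x₀, -⟩
  · exact ⟨fun _ => ∅, fun _ => .empty, fun _ _ _ => disjoint_bot_left, iUnion_empty,
      fun _ => injOn_empty f⟩
  have hV : ∀ x, ∃ V, IsOpen V ∧ (x ∈ s → x ∈ V) ∧ InjOn f (V ∩ s) := by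
    intro x
    by_cases hx : x ∈ s
    · obtain ⟨U, hU, hinj⟩ := hloc x hx
      obtain ⟨V, hVo, hxV, hVU⟩ := mem_nhdsWithin.mp hU
      exact ⟨V, hVo, fun _ => hxV, hinj.mono hVU⟩
    · exact ⟨∅, isOpen_empty, fun h => absurd h hx, by simp⟩
  choose V hVo hxV hVinj using hV
  obtain ⟨T, hTc, hTV⟩ := TopologicalSpace.isOpen_iUnion_countable V hVo
  set u : ℕ → Set X := fun n => V (enumerateCountable hTc x₀ n) ∩ s
  have hu : ⋃ n, u n = s := by
    refine Subset.antisymm (iUnion_subset fun n => inter_subset_right) fun x hx => ?_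
    obtain ⟨y, hyT, hxy⟩ := mem_iUnion₂.1 (hTV.symm ▸ mem_iUnion.2 ⟨x, hxV x hx⟩ :
      x ∈ ⋃ y ∈ T, V y)
    obtain ⟨n, rfl⟩ := subset_range_enumerate hTc x₀ hyT
    exact mem_iUnion.2 ⟨n, hxy, hx⟩
  exact ⟨disjointed u, .disjointed fun n => (hVo _).measurableSet.inter hs,
    disjoint_disjointed u, by rw [iUnion_disjointed, hu],
    fun n => (hVinj _).mono (disjointed_subset u n)⟩

theorem tsum_indicator_image_le {ι α β : Type*} {f : α → β} {t : ι → Set α}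
    (ht : Pairwise (Disjoint on t)) (g : β → ℝ≥0∞) (w : β) :
    ∑' i, (f '' t i).indicator g w ≤ ((⋃ i, t i) ∩ f ⁻¹' {w}).encard * g w := by
  have hsum : ∑' i, (f '' t i).indicator g w = ∑' _ : {i | w ∈ f '' t i}, g w :=
    (tsum_subtype _ fun _ => g w).symm
  rw [hsum, ENNReal.tsum_set_const]
  gcongr
  let e : {i | w ∈ f '' t i} ↪ ((⋃ i, t i) ∩ f ⁻¹' {w} : Set α) :=
    ⟨fun i => ⟨i.2.choose, mem_iUnion.2 ⟨i, i.2.choose_spec.1⟩, i.2.choose_spec.2⟩,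
      fun i j hij => Subtype.ext <| by_contra fun hne => by
        have hij : i.2.choose = j.2.choose := congrArg Subtype.val hij
        exact disjoint_left.mp (ht hne) i.2.choose_spec.1 (hij ▸ j.2.choose_spec.1)⟩
  exact e.encard_le

section AreaFormula

variable {E : Type*} [NormedAddCommGroup E] [NormedSpace ℝ E] [FiniteDimensional ℝ E]
  [MeasurableSpace E] [BorelSpace E] (μ : Measure E) [μ.IsAddHaarMeasure]

theorem lintegral_abs_det_fderiv_mul_le {f : E → E} {f' : E → E →L[ℝ] E} {s : Set E}
    (hs : MeasurableSet s) (hf' : ∀ x ∈ s, HasFDerivWithinAt f (f' x) s x)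
    (hloc : ∀ x ∈ s, ∃ U ∈ 𝓝[s] x, InjOn f U) {m : ℕ}
    (hfib : ∀ w, (s ∩ f ⁻¹' {w}).encard ≤ m) {g : E → ℝ≥0∞} (hg : Measurable g) :
    ∫⁻ x in s, ENNReal.ofReal |(f' x).det| * g (f x) ∂μ ≤ m * ∫⁻ w, g w ∂μ := by
  obtain ⟨t, htm, htd, hts, hinj⟩ := exists_measurable_partition_injOn hs hloc
  have hf't : ∀ n, ∀ x ∈ t n, HasFDerivWithinAt f (f' x) (t n) x := fun n x hx =>
    have hsub : t n ⊆ s := hts ▸ subset_iUnion t n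
    (hf' x (hsub hx)).mono hsub
  have him : ∀ n, MeasurableSet (f '' t n) := fun n =>
    measurable_image_of_fderivWithin (htm n) (hf't n) (hinj n)
  calc ∫⁻ x in s, ENNReal.ofReal |(f' x).det| * g (f x) ∂μ
      = ∑' n, ∫⁻ x in t n, ENNReal.ofReal |(f' x).det| * g (f x) ∂μ := by
        rw [← hts, lintegral_iUnion htm htd]
    _ = ∑' n, ∫⁻ w, (f '' t n).indicator g w ∂μ := by
        congr 1 with n
        rw [lintegral_indicator (him n),
          lintegral_image_eq_lintegral_abs_det_fderiv_mul μ (htm n) (hf't n) (hinj n)]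
    _ = ∫⁻ w, ∑' n, (f '' t n).indicator g w ∂μ :=
        (lintegral_tsum fun n => (hg.indicator (him n)).aemeasurable).symm
    _ ≤ ∫⁻ w, m * g w ∂μ := by
        refine lintegral_mono fun w => (tsum_indicator_image_le htd g w).trans ?_
        rw [hts]
        gcongr
        exact_mod_cast hfib w
    _ = m * ∫⁻ w, g w ∂μ := lintegral_const_mul _ hg

end AreaFormula

theorem Complex.det_restrictScalars_toSpanSingleton (c : ℂ) :
    ((ContinuousLinearMap.toSpanSingleton ℂ c).restrictScalars ℝ).det = ‖c‖ ^ 2 := by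
  simp [ContinuousLinearMap.det, LinearMap.det_restrictScalars, Algebra.norm_complex_eq,
    Complex.normSq_eq_norm_sq]

theorem HasStrictDerivAt.exists_mem_nhds_injOn {𝕜 : Type*} [NontriviallyNormedField 𝕜]
    [CompleteSpace 𝕜] {f : 𝕜 → 𝕜} {f' x : 𝕜} (hf : HasStrictDerivAt f f' x) (hf' : f' ≠ 0) :
    ∃ U ∈ 𝓝 x, InjOn f U :=
  let e := hf.hasStrictFDerivAt_equiv hf'
  ⟨_, (e.toOpenPartialHomeomorph f).open_source.mem_nhds e.mem_toOpenPartialHomeomorph_source,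
    (e.toOpenPartialHomeomorph f).injOn⟩

theorem lintegral_enorm_deriv_sq_mul_le {f : ℂ → ℂ} {U : Set ℂ} (hU : IsOpen U)
    (hf : DifferentiableOn ℂ f U) {m : ℕ} (hfib : ∀ w, (U ∩ f ⁻¹' {w}).encard ≤ m)
    {g : ℂ → ℝ≥0∞} (hg : Measurable g) :
    ∫⁻ z in U, ‖deriv f z‖ₑ ^ 2 * g (f z) ≤ m * ∫⁻ w, g w := by
  set C := {z | deriv f z ≠ 0}
  have hC : MeasurableSet C := measurable_deriv f (measurableSet_singleton 0).compl
  have hstrict : ∀ z ∈ U, HasStrictDerivAt f (deriv f z) z := fun z hz =>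
    (hf.analyticAt (hU.mem_nhds hz)).hasStrictDerivAt
  -- Critical points contribute nothing, and off them `f` is locally injective.
  calc ∫⁻ z in U, ‖deriv f z‖ₑ ^ 2 * g (f z)
      = ∫⁻ z in U, C.indicator (fun z => ‖deriv f z‖ₑ ^ 2 * g (f z)) z := by
        refine setLIntegral_congr_fun hU.measurableSet fun z _ => ?_
        by_cases h : deriv f z = 0 <;> simp [C, h]
    _ = ∫⁻ z in C ∩ U, ENNReal.ofReal
          |((ContinuousLinearMap.toSpanSingleton ℂ (deriv f z)).restrictScalars ℝ).det| *
          g (f z) := by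
        rw [setLIntegral_indicator hC]
        congr! 2 with z
        rw [Complex.det_restrictScalars_toSpanSingleton, abs_of_nonneg (by positivity),
          ENNReal.ofReal_pow (norm_nonneg _), ofReal_norm]
    _ ≤ m * ∫⁻ w, g w :=
        lintegral_abs_det_fderiv_mul_le volume (hC.inter hU.measurableSet)
          (fun z hz =>
            ((hstrict z hz.2).hasDerivAt.hasFDerivAt.restrictScalars ℝ).hasFDerivWithinAt)
          (fun z hz =>
            have ⟨V, hV, hinj⟩ := (hstrict z hz.2).exists_mem_nhds_injOn hz.1
            ⟨V, mem_nhdsWithin_of_mem_nhds hV, hinj⟩)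
          (fun w => (encard_mono (inter_subset_inter_left _ inter_subset_right)).trans (hfib w))
          hg

theorem Polynomial.encard_setOf_eval_eq_le {R : Type*} [CommRing R] [IsDomain R]
    {p : Polynomial R} (hp : 0 < p.degree) (w : R) : {z | p.eval z = w}.encard ≤ p.natDegree := by
  classical
  calc {z | p.eval z = w}.encard
      ≤ ((p - Polynomial.C w).roots.toFinset : Set R).encard := by
        refine encard_mono fun z hz => ?_
        have hne : p - Polynomial.C w ≠ 0 := fun h =>
          hp.not_ge (sub_eq_zero.mp h ▸ Polynomial.degree_C_le)
        simp [Polynomial.mem_roots hne, sub_eq_zero.mpr hz]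
    _ ≤ p.natDegree := by
        rw [encard_coe_eq_coe_finsetCard]
        exact_mod_cast (Multiset.toFinset_card_le _).trans (Polynomial.card_roots_sub_C' hp)

theorem integral_Ioi_mul_inv_one_add_sq_sq :
    ∫ r in Ioi (0 : ℝ), r * ((1 + r ^ 2) ^ 2)⁻¹ = 1 / 2 := by
  have hderiv : ∀ r ∈ Ici (0 : ℝ),
      HasDerivAt (fun r => -1 / 2 * (1 + r ^ 2)⁻¹) (r * ((1 + r ^ 2) ^ 2)⁻¹) r := fun r _ =>
    ((((hasDerivAt_pow 2 r).const_add 1).inv (by positivity)).const_mul (-1 / 2)).congr_deriv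
      (by field_simp; ring)
  have hlim : Tendsto (fun r : ℝ => -1 / 2 * (1 + r ^ 2)⁻¹) atTop (𝓝 0) := by
    simpa using ((tendsto_atTop_add_const_left _ 1
      (tendsto_pow_atTop (α := ℝ) two_ne_zero)).inv_tendsto_atTop.const_mul (-1 / 2))
  rw [integral_Ioi_of_hasDerivAt_of_nonneg' hderiv
    (fun r hr => mul_nonneg (le_of_lt hr) (by positivity)) hlim]
  norm_num

theorem integral_inv_one_add_norm_sq_sq :
    ∫ w : ℂ, ((1 + ‖w‖ ^ 2) ^ 2)⁻¹ = Real.pi := by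
  rw [integral_fun_norm_addHaar volume fun r => ((1 + r ^ 2) ^ 2)⁻¹]
  simp [Measure.real, Complex.volume_ball, integral_Ioi_mul_inv_one_add_sq_sq, mul_comm Real.pi]

theorem integrable_inv_one_add_norm_sq_sq :
    Integrable fun w : ℂ => ((1 + ‖w‖ ^ 2) ^ 2)⁻¹ :=
  (integrable_rpow_neg_one_add_norm_sq (r := 4) (by norm_num)).congr <| ae_of_all _ fun w => by
    norm_num [Real.rpow_neg (by positivity : (0 : ℝ) ≤ 1 + ‖w‖ ^ 2)]

theorem lintegral_ofReal_inv_one_add_norm_sq_sq :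
    ∫⁻ w : ℂ, ENNReal.ofReal ((1 + ‖w‖ ^ 2) ^ 2)⁻¹ = ENNReal.ofReal Real.pi := by
  rw [← ofReal_integral_eq_lintegral_ofReal integrable_inv_one_add_norm_sq_sq
    (ae_of_all _ fun w => by positivity), integral_inv_one_add_norm_sq_sq]

theorem Measurable.sphDeriv {f : ℂ → ℂ} (hf : Measurable f) : Measurable (sphDeriv f) :=
  (measurable_deriv f).norm.div (measurable_const.add (hf.norm.pow_const 2))

theorem ofReal_sphDeriv_sq (f : ℂ → ℂ) (z : ℂ) :
    ENNReal.ofReal (sphDeriv f z ^ 2) =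
      ‖deriv f z‖ₑ ^ 2 * ENNReal.ofReal ((1 + ‖f z‖ ^ 2) ^ 2)⁻¹ := by
  rw [sphDeriv, div_pow, div_eq_mul_inv, ENNReal.ofReal_mul (by positivity),
    ENNReal.ofReal_pow (norm_nonneg _), ofReal_norm]

theorem stmt_14 (P : Polynomial ℂ) (hm : 1 ≤ P.natDegree) :
    ∫ z : ℂ, (sphDeriv (fun w => P.eval w) z) ^ 2 ≤ (P.natDegree : ℝ) * Real.pi := by
  set f : ℂ → ℂ := fun w => P.eval w
  have hfib : ∀ w, (univ ∩ f ⁻¹' {w}).encard ≤ P.natDegree := fun w => by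
    rw [univ_inter]
    exact P.encard_setOf_eval_eq_le (Polynomial.natDegree_pos_iff_degree_pos.mp hm) w
  have hbound := lintegral_enorm_deriv_sq_mul_le isOpen_univ P.differentiable.differentiableOn
    hfib (g := fun w => ENNReal.ofReal ((1 + ‖w‖ ^ 2) ^ 2)⁻¹) (by fun_prop)
  rw [Measure.restrict_univ, lintegral_ofReal_inv_one_add_norm_sq_sq] at hbound
  rw [integral_eq_lintegral_of_nonneg_ae (ae_of_all _ fun z => sq_nonneg _)
    (P.continuous.measurable.sphDeriv.pow_const 2).aestronglyMeasurable]
  refine ENNReal.toReal_le_of_le_ofReal (by positivity) ?_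
  simp_rw [ofReal_sphDeriv_sq]
  rwa [ENNReal.ofReal_mul (Nat.cast_nonneg _), ENNReal.ofReal_natCast]
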